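/- arXiv:1711.04206 — 7 statements merged into one kernel-verified Lean document; each statement's English description precedes it below -/
import Mathlib

section
/- Let m ≥ 1 and R = K[x1,x2,x3,x4]/(x1², x2², x3², x4^{m+1}, x1x2, x1x3, x2x4^m, x3x4^m, x2x3 − x1x4). Then the images of the monomials 1, x1, and x4^{ℓ+1}, x1·x4^{ℓ+1}, x2·x4^ℓ, x3·x4^ℓ for 0 ≤ ℓ ≤ m−1 form a K-vector space basis of R. -/
/-!
A monomial not divisible by one of the eight monomial relations is one of the proposed basis
monomials or `x₂x₃x₄^ℓ` with `ℓ < m`, which the binomial relation identifies with `x₁x₄^{ℓ+1}`;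
so the proposed elements span. Conversely, the linear map sending each monomial to its coordinate
vector in the proposed basis (zero on divisible monomials, the same vector on `x₂x₃x₄^ℓ` and
`x₁x₄^{ℓ+1}`) kills `r * g` for every monomial `r` and relation `g`, hence kills the ideal, and it
sends the proposed elements to the standard basis of `K^(4m+2)`.
-/

open MvPolynomial

noncomputable def relIdeal (K : Type*) [Field K] (m : ℕ) :
    Ideal (MvPolynomial (Fin 4) K) :=
  Ideal.span {X 0 ^ 2, X 1 ^ 2, X 2 ^ 2, X 3 ^ (m + 1), X 0 * X 1, X 0 * X 2,
    X 1 * X 3 ^ m, X 2 * X 3 ^ m, X 1 * X 2 - X 0 * X 3}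

noncomputable def exps (a b c d : ℕ) : Fin 4 →₀ ℕ :=
  Finsupp.equivFunOnFinite.symm ![a, b, c, d]

@[simp]
lemma exps_apply (a b c d : ℕ) (k : Fin 4) : exps a b c d k = ![a, b, c, d] k := rfl

lemma exps_le_iff {a b c d : ℕ} {u : Fin 4 →₀ ℕ} :
    exps a b c d ≤ u ↔ a ≤ u 0 ∧ b ≤ u 1 ∧ c ≤ u 2 ∧ d ≤ u 3 := by
  simp [Finsupp.le_def, Fin.forall_fin_succ]

lemma eq_exps_iff {a b c d : ℕ} {u : Fin 4 →₀ ℕ} :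
    u = exps a b c d ↔ u 0 = a ∧ u 1 = b ∧ u 2 = c ∧ u 3 = d := by
  simp [Finsupp.ext_iff, Fin.forall_fin_succ]

lemma monomial_exps {R : Type*} [CommSemiring R] (a b c d : ℕ) :
    monomial (exps a b c d) (1 : R) = X 0 ^ a * X 1 ^ b * X 2 ^ c * X 3 ^ d := by
  rw [monomial_eq, Finsupp.prod_fintype _ _ fun _ => pow_zero _, Fin.prod_univ_four]
  simp [mul_assoc]

noncomputable def basisExps (m : ℕ) : Fin 2 ⊕ Fin m × Fin 4 → Fin 4 →₀ ℕ :=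
  Sum.elim ![exps 0 0 0 0, exps 1 0 0 0]
    fun p => ![exps 0 0 0 (p.1 + 1), exps 1 0 0 (p.1 + 1), exps 0 1 0 p.1, exps 0 0 1 p.1] p.2

/-- A second monomial representing the same basis element: `x₂x₃x₄^ℓ` in place of
`x₁x₄^{ℓ+1}`, and the basis monomial itself otherwise. -/
noncomputable def altExps (m : ℕ) : Fin 2 ⊕ Fin m × Fin 4 → Fin 4 →₀ ℕ :=
  Sum.elim ![exps 0 0 0 0, exps 1 0 0 0]
    fun p => ![exps 0 0 0 (p.1 + 1), exps 0 1 1 p.1, exps 0 1 0 p.1, exps 0 0 1 p.1] p.2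

noncomputable def relExps (m : ℕ) : Set (Fin 4 →₀ ℕ) :=
  {exps 2 0 0 0, exps 0 2 0 0, exps 0 0 2 0, exps 0 0 0 (m + 1), exps 1 1 0 0, exps 1 0 1 0,
    exps 0 1 0 m, exps 0 0 1 m}

lemma relIdeal_eq_span (K : Type*) [Field K] (m : ℕ) :
    relIdeal K m =
      Ideal.span ((monomial · (1 : K)) '' relExps m ∪ {X 1 * X 2 - X 0 * X 3}) := by
  simp only [relIdeal, relExps, Set.image_insert_eq, Set.image_singleton, monomial_exps]
  congr 1
  ext
  simp only [Set.mem_insert_iff, Set.mem_singleton_iff, Set.mem_union]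
  ring_nf
  tauto

open Classical in
noncomputable def normalForm (K : Type*) [Field K] (m : ℕ) (u : Fin 4 →₀ ℕ) :
    Fin 2 ⊕ Fin m × Fin 4 → K :=
  fun i => if u = basisExps m i ∨ u = altExps m i then 1 else 0

noncomputable def normalFormLin (K : Type*) [Field K] (m : ℕ) :
    MvPolynomial (Fin 4) K →ₗ[K] Fin 2 ⊕ Fin m × Fin 4 → K :=
  (basisMonomials (Fin 4) K).constr K (normalForm K m)

section

variable {K : Type*} [Field K] {m : ℕ}

lemma monomial_mem_relIdeal {u w : Fin 4 →₀ ℕ} (hw : w ∈ relExps m) (hwu : w ≤ u) :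
    monomial u (1 : K) ∈ relIdeal K m := by
  rw [relIdeal_eq_span]
  exact Ideal.mem_of_dvd _ (monomial_dvd_monomial.mpr ⟨.inr hwu, one_dvd _⟩)
    (Ideal.subset_span (.inl ⟨w, hw, rfl⟩))

lemma not_le_basisExps {w : Fin 4 →₀ ℕ} (hw : w ∈ relExps m) (i : Fin 2 ⊕ Fin m × Fin 4) :
    ¬ w ≤ basisExps m i := by
  simp only [relExps, Set.mem_insert_iff, Set.mem_singleton_iff] at hw
  rcases i with i | ⟨l, k⟩ <;> (try fin_cases i) <;> (try fin_cases k) <;>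
    rcases hw with rfl | rfl | rfl | rfl | rfl | rfl | rfl | rfl <;>
    simp [basisExps, exps_le_iff]

lemma not_le_altExps {w : Fin 4 →₀ ℕ} (hw : w ∈ relExps m) (i : Fin 2 ⊕ Fin m × Fin 4) :
    ¬ w ≤ altExps m i := by
  simp only [relExps, Set.mem_insert_iff, Set.mem_singleton_iff] at hw
  rcases i with i | ⟨l, k⟩ <;> (try fin_cases i) <;> (try fin_cases k) <;>
    rcases hw with rfl | rfl | rfl | rfl | rfl | rfl | rfl | rfl <;>
    simp [altExps, exps_le_iff]

lemma exists_eq_basisExps_or_altExps {u : Fin 4 →₀ ℕ} (hu : ∀ w ∈ relExps m, ¬ w ≤ u) :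
    ∃ i, u = basisExps m i ∨ u = altExps m i := by
  simp only [relExps, Set.mem_insert_iff, Set.mem_singleton_iff, forall_eq_or_imp, forall_eq,
    exps_le_iff] at hu
  obtain ⟨a, b, c, d, rfl⟩ : ∃ a b c d, u = exps a b c d :=
    ⟨_, _, _, _, eq_exps_iff.mpr ⟨rfl, rfl, rfl, rfl⟩⟩
  simp only [exps_apply, Matrix.cons_val] at hu
  obtain ⟨ha, hb, hc⟩ : a ≤ 1 ∧ b ≤ 1 ∧ c ≤ 1 := by omega
  interval_cases a <;> interval_cases b <;> interval_cases c
  · rcases d with _ | l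
    · exact ⟨.inl 0, .inl rfl⟩
    · exact ⟨.inr (⟨l, by omega⟩, 0), .inl rfl⟩
  · exact ⟨.inr (⟨d, by omega⟩, 3), .inl rfl⟩
  · exact ⟨.inr (⟨d, by omega⟩, 2), .inl rfl⟩
  · exact ⟨.inr (⟨d, by omega⟩, 1), .inr rfl⟩
  · rcases d with _ | l
    · exact ⟨.inl 1, .inl rfl⟩
    · exact ⟨.inr (⟨l, by omega⟩, 1), .inl rfl⟩
  all_goals omega

lemma mk_monomial_altExps (i : Fin 2 ⊕ Fin m × Fin 4) :
    Ideal.Quotient.mk (relIdeal K m) (monomial (altExps m i) 1) =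
      Ideal.Quotient.mk (relIdeal K m) (monomial (basisExps m i) 1) := by
  rcases i with i | ⟨l, k⟩
  · simp only [altExps, basisExps, Sum.elim_inl]
  fin_cases k
  · simp [altExps, basisExps]
  · have hrel : X 1 * X 2 - X 0 * X 3 ∈ relIdeal K m :=
      relIdeal_eq_span K m ▸ Ideal.subset_span (.inr rfl)
    refine Ideal.Quotient.eq.mpr ?_
    simp only [altExps, basisExps, Sum.elim_inr, Fin.mk_one, Matrix.cons_val_one,
      Matrix.cons_val_zero, monomial_exps]
    convert Ideal.mul_mem_left _ (X 3 ^ (l : ℕ)) hrel using 1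
    ring
  · simp [altExps, basisExps]
  · simp [altExps, basisExps]

lemma mk_monomial_mem_span (u : Fin 4 →₀ ℕ) :
    Ideal.Quotient.mk (relIdeal K m) (monomial u 1) ∈ Submodule.span K
      (Set.range fun i => Ideal.Quotient.mk (relIdeal K m) (monomial (basisExps m i) 1)) := by
  by_cases hu : ∃ w ∈ relExps m, w ≤ u
  · obtain ⟨w, hw, hwu⟩ := hu
    rw [Ideal.Quotient.eq_zero_iff_mem.mpr (monomial_mem_relIdeal hw hwu)]
    exact zero_mem _
  · push Not at hu
    obtain ⟨i, rfl | rfl⟩ := exists_eq_basisExps_or_altExps hu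
    · exact Submodule.subset_span ⟨i, rfl⟩
    · rw [mk_monomial_altExps]
      exact Submodule.subset_span ⟨i, rfl⟩

lemma span_mk_monomial_basisExps_eq_top :
    Submodule.span K
      (Set.range fun i => Ideal.Quotient.mk (relIdeal K m) (monomial (basisExps m i) 1)) = ⊤ := by
  let π := (Ideal.Quotient.mkₐ K (relIdeal K m)).toLinearMap
  refine eq_top_iff.mpr ?_
  calc ⊤ = (⊤ : Submodule K (MvPolynomial (Fin 4) K)).map π := by
        rw [Submodule.map_top, LinearMap.range_eq_top.mpr (Ideal.Quotient.mkₐ_surjective K _)]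
    _ = (Submodule.span K (Set.range (basisMonomials (Fin 4) K))).map π := by
        rw [(basisMonomials (Fin 4) K).span_eq]
    _ ≤ _ := by
        rw [Submodule.map_span, Submodule.span_le]
        rintro _ ⟨_, ⟨u, rfl⟩, rfl⟩
        exact mk_monomial_mem_span u

lemma basisExps_eq_or_altExps_iff (i j : Fin 2 ⊕ Fin m × Fin 4) :
    basisExps m j = basisExps m i ∨ basisExps m j = altExps m i ↔ i = j := by
  rcases i with i | ⟨l, k⟩ <;> rcases j with j | ⟨l', k'⟩ <;>
    (try fin_cases i) <;> (try fin_cases j) <;> (try fin_cases k) <;> (try fin_cases k') <;>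
    simp [basisExps, altExps, eq_exps_iff, Fin.ext_iff] <;> omega

lemma normalForm_basisExps (j : Fin 2 ⊕ Fin m × Fin 4) :
    normalForm K m (basisExps m j) = Pi.single j 1 := by
  ext i
  simp only [normalForm, basisExps_eq_or_altExps_iff, Pi.single_apply]

lemma normalForm_eq_zero {u w : Fin 4 →₀ ℕ} (hw : w ∈ relExps m) (hwu : w ≤ u) :
    normalForm K m u = 0 := by
  ext i
  refine if_neg ?_
  rintro (rfl | rfl)
  exacts [not_le_basisExps hw i hwu, not_le_altExps hw i hwu]

lemma normalForm_add_exps_0110 (u : Fin 4 →₀ ℕ) :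
    normalForm K m (u + exps 0 1 1 0) = normalForm K m (u + exps 1 0 0 1) := by
  ext i
  simp only [normalForm]
  congr 1
  rcases i with i | ⟨l, k⟩ <;> (try fin_cases i) <;> (try fin_cases k) <;>
    simp [basisExps, altExps, eq_exps_iff]

lemma normalFormLin_monomial (u : Fin 4 →₀ ℕ) (a : K) :
    normalFormLin K m (monomial u a) = a • normalForm K m u := by
  have h1 : normalFormLin K m (monomial u 1) = normalForm K m u := by
    rw [normalFormLin]
    simpa using (basisMonomials (Fin 4) K).constr_basis K (normalForm K m) u
  rw [← h1, ← map_smul, smul_monomial, smul_eq_mul, mul_one]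

lemma normalFormLin_mul_eq_zero {p : MvPolynomial (Fin 4) K} (hp : p ∈ relIdeal K m)
    (r : MvPolynomial (Fin 4) K) : normalFormLin K m (r * p) = 0 := by
  rw [relIdeal_eq_span] at hp
  induction hp using Submodule.span_induction generalizing r with
  | mem g hg =>
    induction r using MvPolynomial.induction_on' with
    | monomial u a =>
      rcases hg with ⟨w, hw, rfl⟩ | rfl
      · rw [monomial_mul, mul_one, normalFormLin_monomial, normalForm_eq_zero hw le_add_self,
          smul_zero]
      · have h12 : (X 1 * X 2 : MvPolynomial (Fin 4) K) = monomial (exps 0 1 1 0) 1 := by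
          simp [monomial_exps]
        have h03 : (X 0 * X 3 : MvPolynomial (Fin 4) K) = monomial (exps 1 0 0 1) 1 := by
          simp [monomial_exps]
        rw [h12, h03, mul_sub, monomial_mul, monomial_mul, mul_one, map_sub,
          normalFormLin_monomial, normalFormLin_monomial, normalForm_add_exps_0110, sub_self]
    | add p q hp hq => rw [add_mul, map_add, hp, hq, add_zero]
  | zero => simp
  | add x y _ _ hx hy => rw [mul_add, map_add, hx, hy, add_zero]
  | smul a x _ hx => rw [smul_eq_mul, ← mul_assoc, hx]

lemma linearIndependent_mk_monomial_basisExps :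
    LinearIndependent K
      fun i => Ideal.Quotient.mk (relIdeal K m) (monomial (basisExps m i) (1 : K)) := by
  rw [Fintype.linearIndependent_iff]
  intro g hg
  have hmem : ∑ i, g i • monomial (basisExps m i) (1 : K) ∈ relIdeal K m := by
    rw [← Ideal.Quotient.eq_zero_iff_mem, ← Ideal.Quotient.mkₐ_eq_mk K, map_sum]
    simpa only [map_smul, Ideal.Quotient.mkₐ_eq_mk] using hg
  have hg0 := normalFormLin_mul_eq_zero hmem 1
  simp only [one_mul, map_sum, map_smul, normalFormLin_monomial, one_smul,
    normalForm_basisExps] at hg0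
  intro i
  simpa [Pi.single_apply] using congr_fun hg0 i

end

theorem stmt1_general (K : Type*) [Field K] (m : ℕ) :
    let π := Ideal.Quotient.mk (relIdeal K m)
    let v : Fin 2 ⊕ (Fin m × Fin 4) → MvPolynomial (Fin 4) K ⧸ relIdeal K m :=
      Sum.elim ![π 1, π (X 0)]
        (fun p => ![π (X 3 ^ ((p.1 : ℕ) + 1)), π (X 0 * X 3 ^ ((p.1 : ℕ) + 1)),
          π (X 1 * X 3 ^ (p.1 : ℕ)), π (X 2 * X 3 ^ (p.1 : ℕ))] p.2)
    LinearIndependent K v ∧ Submodule.span K (Set.range v) = ⊤ := by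
  intro π v
  have hv : v = fun i => π (monomial (basisExps m i) 1) := by
    funext i
    rcases i with i | ⟨l, k⟩ <;> (try fin_cases i) <;> (try fin_cases k) <;>
      simp [v, π, basisExps, monomial_exps]
  rw [hv]
  exact ⟨linearIndependent_mk_monomial_basisExps, span_mk_monomial_basisExps_eq_top⟩

/-- The images of `1, x1, x4^{ℓ+1}, x1x4^{ℓ+1}, x2x4^ℓ, x3x4^ℓ` (`0 ≤ ℓ ≤ m-1`)
form a `K`-basis of the quotient ring. -/
theorem stmt1 (K : Type*) [Field K] [CharZero K] (m : ℕ) (hm : 1 ≤ m) :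
    let π := Ideal.Quotient.mk (relIdeal K m)
    let v : Fin 2 ⊕ (Fin m × Fin 4) → MvPolynomial (Fin 4) K ⧸ relIdeal K m :=
      Sum.elim ![π 1, π (X 0)]
        (fun p => ![π (X 3 ^ ((p.1 : ℕ) + 1)), π (X 0 * X 3 ^ ((p.1 : ℕ) + 1)),
          π (X 1 * X 3 ^ (p.1 : ℕ)), π (X 2 * X 3 ^ (p.1 : ℕ))] p.2)
    LinearIndependent K v ∧ Submodule.span K (Set.range v) = ⊤ :=
  stmt1_general K m
end

section
/- Let m ≥ 1 and consider the simplex Δ₂^m ⊂ ℝ^{m+1} with vertices the standard basis vectors e₁,…,e_{m+1} and the point v = (−2,…,−2,−2m−1). For each integer b with 0 ≤ b ≤ 4m+1, the point z_b ∈ ℤ^{m+2} whose first coordinate is b − m·⌊b/(2m+1)⌋ − ⌊b/2⌋, whose coordinates 2 through m+1 are equal to −⌊b/(2m+1)⌋, and whose last coordinate is equal to −⌊b/2⌋, lies in the half-open fundamental parallelepiped Π = { Σ aᵢ·(1,vᵢ) : 0 ≤ aᵢ < 1 } of Δ₂^m. -/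
/-- The vertices of `Δ₂^m` (standard basis vectors of `ℝ^{m+1}` together with
`(-2,…,-2,-2m-1)`) lifted to height 1 in `ℝ^{m+2}` (coordinate 0 is the height). -/
noncomputable def liftedVertex (m : ℕ) (i : Fin (m + 2)) : Fin (m + 2) → ℝ :=
  fun j =>
    if j = 0 then 1
    else if (i : ℕ) < m + 1 then (if (j : ℕ) = (i : ℕ) + 1 then 1 else 0)
    else if (j : ℕ) ≤ m then -2 else -(2 * (m : ℝ) + 1)

/-- The half-open fundamental parallelepiped `Π = {Σ aᵢ (1,vᵢ) : 0 ≤ aᵢ < 1}`. -/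
noncomputable def fpp (m : ℕ) : Set (Fin (m + 2) → ℝ) :=
  { p | ∃ a : Fin (m + 2) → ℝ, (∀ i, 0 ≤ a i ∧ a i < 1) ∧
      p = ∑ i, a i • liftedVertex m i }

/-- The lattice point `z_b`: zeroth coordinate `b - m⌊b/(2m+1)⌋ - ⌊b/2⌋`,
coordinates `1,…,m` equal to `-⌊b/(2m+1)⌋`, last coordinate `-⌊b/2⌋`. -/
def zpt (m b : ℕ) : Fin (m + 2) → ℤ :=
  fun j =>
    if j = 0 then (b : ℤ) - m * ((b / (2 * m + 1) : ℕ) : ℤ) - ((b / 2 : ℕ) : ℤ)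
    else if (j : ℕ) ≤ m then -((b / (2 * m + 1) : ℕ) : ℤ)
    else -((b / 2 : ℕ) : ℤ)

/-- For each `0 ≤ b ≤ 4m+1`, the point `z_b` lies in the fundamental
parallelepiped of `Δ₂^m`. -/
theorem stmt5 (m : ℕ) (hm : 1 ≤ m) (b : ℕ) (hb : b ≤ 4 * m + 1) :
    (fun j => ((zpt m b j : ℤ) : ℝ)) ∈ fpp m := by
  set q : ℕ := b / (2 * m + 1) with hqdef
  set r : ℕ := b / 2 with hrdef
  have hM : (0:ℝ) < 2 * m + 1 := by positivity
  have hM2 : (0:ℝ) < 4 * m + 2 := by positivity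
  have h1 : (q:ℝ) * (2 * m + 1) ≤ b := by
    exact_mod_cast Nat.div_mul_le_self b (2 * m + 1)
  have h2 : (b:ℝ) < ((q:ℝ) + 1) * (2 * m + 1) := by
    have e := Nat.div_add_mod b (2 * m + 1)
    have l : b % (2 * m + 1) < 2 * m + 1 := Nat.mod_lt _ (by omega)
    have : b < (q + 1) * (2 * m + 1) := by
      calc b = (2 * m + 1) * q + b % (2 * m + 1) := e.symm
        _ < (2 * m + 1) * q + (2 * m + 1) := Nat.add_lt_add_left l _
        _ = (q + 1) * (2 * m + 1) := by ring
    exact_mod_cast this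
  have h3 : (r:ℝ) * 2 ≤ b := by exact_mod_cast Nat.div_mul_le_self b 2
  have h4 : (b:ℝ) < ((r:ℝ) + 1) * 2 := by
    have e := Nat.div_add_mod b 2
    have l : b % 2 < 2 := Nat.mod_lt _ (by omega)
    have : b < (r + 1) * 2 := by
      calc b = 2 * r + b % 2 := e.symm
        _ < 2 * r + 2 := Nat.add_lt_add_left l _
        _ = (r + 1) * 2 := by ring
    exact_mod_cast this
  have hb' : (b:ℝ) ≤ 4 * m + 1 := by exact_mod_cast hb
  set t : ℝ := (b:ℝ) / (4 * m + 2) with htdef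
  refine ⟨fun i => if (i:ℕ) < m then (b:ℝ)/(2*m+1) - q
      else if (i:ℕ) = m then (b:ℝ)/2 - r else t, ?_, ?_⟩
  · intro i
    by_cases h : (i:ℕ) < m
    · simp only [h, if_pos]
      constructor
      · rw [sub_nonneg, le_div_iff₀ hM]; exact h1
      · rw [sub_lt_iff_lt_add, div_lt_iff₀ hM]
        calc (b:ℝ) < ((q:ℝ)+1)*(2*m+1) := h2
          _ = (1 + q) * (2*m+1) := by ring
    · simp only [h, if_neg, if_false]
      by_cases h' : (i:ℕ) = m
      · simp only [h', if_pos]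
        constructor
        · rw [sub_nonneg, le_div_iff₀ (by norm_num : (0:ℝ) < 2)]; exact h3
        · rw [sub_lt_iff_lt_add, div_lt_iff₀ (by norm_num : (0:ℝ) < 2)]
          calc (b:ℝ) < ((r:ℝ)+1)*2 := h4
            _ = (1 + r) * 2 := by ring
      · simp only [h', if_neg, if_false]
        constructor
        · positivity
        · rw [htdef, div_lt_one hM2]; linarith
  · funext j
    rw [Finset.sum_apply]
    simp only [Pi.smul_apply, smul_eq_mul]
    rw [Fin.sum_univ_castSucc]
    by_cases hj0 : j = 0
    · subst hj0
      have hL : ∀ i : Fin (m+2), liftedVertex m i 0 = 1 := by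
        intro i; simp [liftedVertex]
      simp only [hL, mul_one]
      rw [Fin.sum_univ_castSucc]
      have hv1 : ∀ x : Fin m, ((x.castSucc.castSucc : Fin (m+2)) : ℕ) = (x : ℕ) :=
        fun x => rfl
      have hv2 : (((Fin.last m).castSucc : Fin (m+2)) : ℕ) = m := rfl
      have hv3 : ((Fin.last (m+1) : Fin (m+2)) : ℕ) = m + 1 := rfl
      simp only [hv1, hv2, hv3]
      rw [Finset.sum_congr rfl (fun x _ => if_pos x.isLt)]
      simp only [lt_irrefl, if_false, if_true,
        if_neg (show ¬ m + 1 < m by omega), if_neg (show ¬ m + 1 = m by omega)]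
      rw [Finset.sum_const, Finset.card_univ, Fintype.card_fin, nsmul_eq_mul]
      show ((zpt m b 0 : ℤ) : ℝ) = _
      simp only [zpt, if_pos rfl]
      rw [← hqdef, ← hrdef, htdef]
      push_cast
      field_simp
      ring
    · have hj1 : 1 ≤ (j:ℕ) := by
        rcases Nat.eq_zero_or_pos (j:ℕ) with h | h
        · exact absurd (Fin.ext h) hj0
        · exact h
      have hjle : (j:ℕ) ≤ m + 1 := by omega
      set k : ℕ := (j:ℕ) - 1 with hkdef
      have hk : k < m + 1 := by omega
      have hjk : (j:ℕ) = k + 1 := by omega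
      have hLlast : liftedVertex m (Fin.last (m+1)) j =
          if (j:ℕ) ≤ m then -2 else -(2*(m:ℝ)+1) := by
        simp [liftedVertex, hj0, Fin.last]
      have hLc : ∀ i : Fin (m+1), liftedVertex m i.castSucc j =
          if (j:ℕ) = (i:ℕ) + 1 then 1 else 0 := by
        intro i
        simp [liftedVertex, hj0, i.isLt, Fin.lt_iff_val_lt_val]
      simp only [hLc, hLlast, mul_ite, mul_one, mul_zero]
      rw [Finset.sum_eq_single (⟨k, hk⟩ : Fin (m+1))]
      · simp only [if_pos hjk]
        by_cases hjm : (j:ℕ) ≤ m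
        · have hkm : k < m := by omega
          show ((zpt m b j : ℤ) : ℝ) = _
          simp only [zpt, if_neg hj0, if_pos hjm]
          simp only [Fin.coe_castSucc, hkm, if_pos, if_true, hjm, Fin.val_last,
            show ¬ m + 1 < m by omega, show ¬ m + 1 = m by omega, if_false]
          rw [← hqdef, htdef]
          push_cast
          field_simp
          ring
        · have hkm : k = m := by omega
          show ((zpt m b j : ℤ) : ℝ) = _
          simp only [zpt, if_neg hj0, if_neg hjm]
          simp only [Fin.coe_castSucc, hkm, lt_irrefl, if_neg, if_false,
            if_pos rfl, if_true, hjm, Fin.val_last,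
            show ¬ m + 1 < m by omega, show ¬ m + 1 = m by omega]
          rw [← hrdef, htdef]
          push_cast
          field_simp
          ring
      · intro i _ hne
        rw [if_neg]
        intro hcon
        exact hne (Fin.ext (show (i:ℕ) = k by omega))
      · intro h; exact absurd (Finset.mem_univ _) h
end

section
/- Let m ≥ 1 and let Π be the fundamental parallelepiped of Δ₂^m. Then for each integer h with 1 ≤ h ≤ m, there are exactly 4 lattice points in Π with zeroth coordinate equal to h. -/
set_option maxHeartbeats 1000000

namespace Stmt7

def Pt (m h : ℕ) (e n : ℤ) : Fin (m + 2) → ℤ :=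
  fun j => if (j : ℕ) = 0 then (h : ℤ) else if (j : ℕ) = m + 1 then n else e


lemma coord0 (m : ℕ) (a : Fin (m+2) → ℝ) :
    (∑ i, a i • liftedVertex m i) 0 = ∑ i, a i := by
  rw [Finset.sum_apply]
  refine Finset.sum_congr rfl fun i _ => ?_
  simp [liftedVertex, smul_eq_mul]

lemma coordMid (m : ℕ) (a : Fin (m+2) → ℝ) (j : Fin (m+2)) (hj1 : 1 ≤ (j:ℕ))
    (hj2 : (j:ℕ) ≤ m) :
    (∑ i, a i • liftedVertex m i) j
      = a ⟨(j:ℕ)-1, by omega⟩ - 2 * a ⟨m+1, by omega⟩ := by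
  have hj0 : j ≠ 0 := by
    intro hc; rw [Fin.ext_iff] at hc; rw [Fin.val_zero] at hc; omega
  rw [Finset.sum_apply, Fin.sum_univ_castSucc]
  simp only [Pi.smul_apply]
  have hlast : ¬ ((Fin.last (m+1) : Fin (m+2)) : ℕ) < m + 1 := by simp
  have h2 : ∀ i : Fin (m+1),
      a i.castSucc • liftedVertex m i.castSucc j
        = if i = (⟨(j:ℕ)-1, by omega⟩ : Fin (m+1)) then a i.castSucc else 0 := by
    intro i
    have hi : ((i.castSucc : Fin (m+2)) : ℕ) = (i : ℕ) := rfl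
    simp only [liftedVertex, hi, if_neg hj0, if_pos i.isLt, smul_eq_mul, mul_ite, mul_one,
      mul_zero]
    congr 1
    simp [Fin.ext_iff]
    omega
  rw [Finset.sum_congr rfl (fun i _ => h2 i), Finset.sum_ite_eq' Finset.univ]
  simp only [Finset.mem_univ, if_pos]
  have hv : liftedVertex m (Fin.last (m+1)) j = -2 := by
    simp [liftedVertex, hj0, hj2]
  rw [hv]
  have hcs : (Fin.castSucc (⟨(j:ℕ)-1, by omega⟩ : Fin (m+1)) : Fin (m+2))
      = ⟨(j:ℕ)-1, by omega⟩ := rfl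
  have ha : a (Fin.last (m+1)) = a ⟨m+1, by omega⟩ := rfl
  rw [hcs, ha, smul_eq_mul]
  ring

lemma coordLast (m : ℕ) (a : Fin (m+2) → ℝ) :
    (∑ i, a i • liftedVertex m i) ⟨m+1, by omega⟩
      = a ⟨m, by omega⟩ - (2*(m:ℝ)+1) * a ⟨m+1, by omega⟩ := by
  have hj0 : (⟨m+1, by omega⟩ : Fin (m+2)) ≠ 0 := by
    intro hc; rw [Fin.ext_iff] at hc; simp at hc
  rw [Finset.sum_apply, Fin.sum_univ_castSucc]
  simp only [Pi.smul_apply]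
  have h2 : ∀ i : Fin (m+1),
      a i.castSucc • liftedVertex m i.castSucc ⟨m+1, by omega⟩
        = if i = (⟨m, by omega⟩ : Fin (m+1)) then a i.castSucc else 0 := by
    intro i
    have hi : ((i.castSucc : Fin (m+2)) : ℕ) = (i : ℕ) := rfl
    simp only [liftedVertex, hi, if_neg hj0, if_pos i.isLt, smul_eq_mul, mul_ite, mul_one,
      mul_zero]
    congr 1
    simp [Fin.ext_iff]
    omega
  rw [Finset.sum_congr rfl (fun i _ => h2 i), Finset.sum_ite_eq' Finset.univ]
  simp only [Finset.mem_univ, if_pos]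
  have hv : liftedVertex m (Fin.last (m+1)) ⟨m+1, by omega⟩ = -(2*(m:ℝ)+1) := by
    simp [liftedVertex, hj0]
  rw [hv]
  have hcs : (Fin.castSucc (⟨m, by omega⟩ : Fin (m+1)) : Fin (m+2))
      = ⟨m, by omega⟩ := rfl
  have ha : a (Fin.last (m+1)) = a ⟨m+1, by omega⟩ := rfl
  rw [hcs, ha, smul_eq_mul]
  ring


lemma sum_eq (m : ℕ) (a : Fin (m+2) → ℝ) (x y w : ℝ)
    (hx : ∀ i (hi : i < m), a ⟨i, by omega⟩ = x)
    (hy : a ⟨m, by omega⟩ = y) (hw : a ⟨m+1, by omega⟩ = w) :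
    ∑ i, a i = m * x + y + w := by
  rw [Fin.sum_univ_castSucc, Fin.sum_univ_castSucc]
  have h1 : a ((Fin.last m).castSucc) = y := hy
  have h2 : a (Fin.last (m+1)) = w := hw
  have h3 : ∀ i : Fin m, a (i.castSucc.castSucc) = x := fun i => hx i i.isLt
  rw [h1, h2, Finset.sum_congr rfl (fun i _ => h3 i), Finset.sum_const]
  simp [mul_comm]

lemma Pt_mem (m h : ℕ) (e n c : ℤ)
    (hA1 : 0 ≤ (2*m+1)*e + c) (hA2 : (2*m+1)*e + c < 2*m+1)
    (hB1 : 0 ≤ 2*n + c) (hB2 : 2*n + c < 2)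
    (hC : c = (h : ℤ) - m*e - n)
    (hc1 : 0 ≤ c) (hc2 : c < 4*m+2) :
    (fun j => ((Pt m h e n j : ℤ) : ℝ)) ∈ fpp m := by
  have h42 : (0:ℝ) < 4*(m:ℝ)+2 := by positivity
  have h21 : (0:ℝ) < 2*(m:ℝ)+1 := by positivity
  set t : ℝ := (c:ℝ) / (4*(m:ℝ)+2) with ht_def
  have ht : (4*(m:ℝ)+2) * t = (c:ℝ) := by
    rw [ht_def]; field_simp
  set a : Fin (m+2) → ℝ := fun i =>
    if (i:ℕ) = m+1 then t else if (i:ℕ) = m then (n:ℝ) + (2*(m:ℝ)+1)*t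
    else (e:ℝ) + 2*t with ha_def
  -- bounds
  have htb : 0 ≤ t ∧ t < 1 := by
    constructor
    · apply div_nonneg _ (le_of_lt h42); exact_mod_cast hc1
    · rw [div_lt_one h42]; push_cast; exact_mod_cast hc2
  have hxval : (2*(m:ℝ)+1) * ((e:ℝ) + 2*t) = ((2*m+1)*e + c : ℤ) := by
    push_cast; nlinarith [ht]
  have hxb : 0 ≤ (e:ℝ) + 2*t ∧ (e:ℝ) + 2*t < 1 := by
    constructor
    · have : (0:ℝ) ≤ (2*(m:ℝ)+1) * ((e:ℝ) + 2*t) := by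
        rw [hxval]; exact_mod_cast hA1
      nlinarith
    · have : (2*(m:ℝ)+1) * ((e:ℝ) + 2*t) < 2*(m:ℝ)+1 := by
        rw [hxval]; exact_mod_cast (by exact_mod_cast hA2 : ((2*m+1)*e + c : ℤ) < ((2*(m:ℕ)+1 : ℕ) : ℤ))
      nlinarith
  have hyval : 2 * ((n:ℝ) + (2*(m:ℝ)+1)*t) = ((2*n + c : ℤ) : ℝ) := by
    push_cast; nlinarith [ht]
  have hyb : 0 ≤ (n:ℝ) + (2*(m:ℝ)+1)*t ∧ (n:ℝ) + (2*(m:ℝ)+1)*t < 1 := by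
    constructor
    · have : (0:ℝ) ≤ 2 * ((n:ℝ) + (2*(m:ℝ)+1)*t) := by rw [hyval]; exact_mod_cast hB1
      linarith
    · have : 2 * ((n:ℝ) + (2*(m:ℝ)+1)*t) < 2 := by
        rw [hyval]; exact_mod_cast hB2
      linarith
  refine ⟨a, ?_, ?_⟩
  · intro i
    rw [ha_def]
    by_cases hi1 : (i:ℕ) = m+1
    · simp only [if_pos hi1]; exact htb
    by_cases hi2 : (i:ℕ) = m
    · simp only [if_neg hi1, if_pos hi2]; exact hyb
    · simp only [if_neg hi1, if_neg hi2]; exact hxb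
  · funext j
    have hsum : ∑ i, a i = (m:ℝ) * ((e:ℝ) + 2*t) + ((n:ℝ) + (2*(m:ℝ)+1)*t) + t := by
      apply sum_eq
      · intro i hi
        rw [ha_def]
        simp only
        rw [if_neg (by omega), if_neg (by omega)]
      · rw [ha_def]; simp only; rw [if_neg (by omega)]; simp
      · rw [ha_def]; simp
    rcases Nat.lt_or_ge (j:ℕ) 1 with hj | hj
    · have hj0 : j = 0 := by
        apply Fin.ext; rw [Fin.val_zero]; omega
      subst hj0
      rw [coord0, hsum]
      have : Pt m h e n 0 = (h:ℤ) := by simp [Pt]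
      rw [this]
      have hC' : ((c:ℤ):ℝ) = (h:ℝ) - (m:ℝ)*(e:ℝ) - (n:ℝ) := by exact_mod_cast hC
      push_cast at hC' ⊢
      linarith [ht, hC', mul_comm (m:ℝ) ((e:ℝ) + 2*t)]
    rcases le_or_gt (j:ℕ) m with hjm | hjm
    · rw [coordMid m a j hj hjm]
      have hv : Pt m h e n j = e := by
        simp only [Pt]
        rw [if_neg (by omega), if_neg (by omega)]
      rw [hv]
      have h1 : a ⟨(j:ℕ)-1, by omega⟩ = (e:ℝ) + 2*t := by
        rw [ha_def]; simp only; rw [if_neg (by omega), if_neg (by omega)]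
      have h2 : a ⟨m+1, by omega⟩ = t := by
        rw [ha_def]; simp
      rw [h1, h2]; ring
    · have hjv : j = ⟨m+1, by omega⟩ := by apply Fin.ext; simp; omega
      rw [hjv]
      rw [coordLast]
      have hv : Pt m h e n ⟨m+1, by omega⟩ = n := by
        simp only [Pt]
        rw [if_neg (by omega)]; simp
      rw [hv]
      have h1 : a ⟨m, by omega⟩ = (n:ℝ) + (2*(m:ℝ)+1)*t := by
        rw [ha_def]; simp only; rw [if_neg (by omega)]; simp
      have h2 : a ⟨m+1, by omega⟩ = t := by
        rw [ha_def]; simp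
      rw [h1, h2]; ring

lemma mem_char (m h : ℕ) (hm : 1 ≤ m) (h1 : 1 ≤ h) (h2 : h ≤ m)
    (z : Fin (m+2) → ℤ)
    (hz : (fun j => ((z j : ℤ) : ℝ)) ∈ fpp m) (hz0 : z 0 = (h : ℤ)) :
    z = Pt m h 0 (1-h) ∨ z = Pt m h 0 (-h) ∨
    z = Pt m h (-1) (1-h-m) ∨ z = Pt m h (-1) (-h-m) := by
  obtain ⟨a, hab, heq⟩ := hz
  have p0 : 0 < m + 2 := Nat.succ_pos _
  have p1 : 1 < m + 2 := Nat.succ_lt_succ (Nat.succ_pos m)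
  have pm1 : m < m + 2 := Nat.lt_succ_of_lt (Nat.lt_succ_self m)
  have pm2 : m + 1 < m + 2 := Nat.lt_succ_self _
  set t : ℝ := a ⟨m+1, pm2⟩ with ht_def
  set e : ℤ := z ⟨1, p1⟩ with he_def
  set n : ℤ := z ⟨m+1, pm2⟩ with hn_def
  -- coordinate equations
  have hq0 : ((z 0 : ℤ) : ℝ) = ∑ i, a i := by
    have := congrFun heq 0
    rw [coord0 m a] at this
    exact this
  have hqmid : ∀ j : Fin (m+2), ∀ hj1 : 1 ≤ (j:ℕ), ∀ hj2 : (j:ℕ) ≤ m,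
      ((z j : ℤ) : ℝ) = a ⟨(j:ℕ)-1, Nat.lt_of_le_of_lt (Nat.sub_le _ _) j.isLt⟩ - 2 * t := by
    intro j hj1 hj2
    have h' := congrFun heq j
    rw [coordMid m a j hj1 hj2] at h'
    exact h'
  have hqlast : ((n : ℤ) : ℝ) = a ⟨m, pm1⟩ - (2*(m:ℝ)+1) * t := by
    have h' := congrFun heq ⟨m+1, pm2⟩
    rw [coordLast m a] at h'
    exact h'
  have hq1 : ((e : ℤ) : ℝ) = a ⟨0, p0⟩ - 2 * t :=
    hqmid ⟨1, p1⟩ (le_refl 1) hm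
  -- all mid coordinates equal e
  have hmid_e : ∀ j : Fin (m+2), 1 ≤ (j:ℕ) → (j:ℕ) ≤ m → z j = e := by
    intro j hj1 hj2
    have hq := hqmid j hj1 hj2
    have b1 := hab ⟨(j:ℕ)-1, Nat.lt_of_le_of_lt (Nat.sub_le _ _) j.isLt⟩
    have b2 := hab ⟨0, p0⟩
    have hlb : (-1 : ℝ) < ((z j - e : ℤ) : ℝ) := by
      push_cast
      rw [hq, hq1]
      linarith [b1.1, b1.2, b2.1, b2.2]
    have hub : ((z j - e : ℤ) : ℝ) < 1 := by
      push_cast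
      rw [hq, hq1]
      linarith [b1.1, b1.2, b2.1, b2.2]
    have h1' : (-1 : ℤ) < z j - e := by exact_mod_cast hlb
    have h2' : z j - e < 1 := by exact_mod_cast hub
    omega
  have ha_mid : ∀ i, ∀ hi : i < m, a ⟨i, Nat.lt_succ_of_lt (Nat.lt_succ_of_lt hi)⟩ = (e:ℝ) + 2*t := by
    intro i hi
    have hj2 : ((⟨i+1, Nat.succ_lt_succ (Nat.lt_succ_of_lt hi)⟩ : Fin (m+2)) : ℕ) ≤ m := hi
    have hq := hqmid _ (Nat.succ_le_succ (Nat.zero_le i)) hj2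
    have hze := hmid_e _ (Nat.succ_le_succ (Nat.zero_le i)) hj2
    rw [hze] at hq
    have haa : a ⟨i, Nat.lt_succ_of_lt (Nat.lt_succ_of_lt hi)⟩
        = a ⟨i+1-1, Nat.lt_of_le_of_lt (Nat.sub_le _ _)
            (⟨i+1, Nat.succ_lt_succ (Nat.lt_succ_of_lt hi)⟩ : Fin (m+2)).isLt⟩ := rfl
    rw [haa]
    linarith [hq]
  have ha_m : a ⟨m, pm1⟩ = (n:ℝ) + (2*(m:ℝ)+1)*t := by linarith [hqlast]
  -- sum equation
  have hsum : ∑ i, a i = (m:ℝ) * ((e:ℝ) + 2*t) + ((n:ℝ) + (2*(m:ℝ)+1)*t) + t := by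
    apply sum_eq m a _ _ _ _ ha_m rfl
    intro i hi
    exact ha_mid i hi
  set c : ℤ := (h:ℤ) - m*e - n with hc_def
  have htc : (4*(m:ℝ)+2) * t = (c:ℝ) := by
    have hh : ((h:ℤ):ℝ) = ∑ i, a i := by rw [← hz0]; exact hq0
    rw [hsum] at hh
    push_cast [hc_def]
    push_cast at hh
    nlinarith [hh]
  have h42 : (0:ℝ) < 4*(m:ℝ)+2 := by positivity
  have ht0 := (hab ⟨m+1, pm2⟩).1
  have ht1 := (hab ⟨m+1, pm2⟩).2
  rw [← ht_def] at ht0 ht1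
  have hc1 : 0 ≤ c := by
    have : (0:ℝ) ≤ (c:ℝ) := by rw [← htc]; nlinarith [ht0]
    exact_mod_cast this
  have hc2 : c < 4*m+2 := by
    have : (c:ℝ) < 4*(m:ℝ)+2 := by rw [← htc]; nlinarith
    exact_mod_cast this
  -- e bounds
  have ha0 := hab ⟨0, p0⟩
  have he0 : e = 0 ∨ e = -1 := by
    have hlb : (-2 : ℝ) < (e:ℝ) := by rw [hq1]; linarith [ha0.1]
    have hub : (e:ℝ) < 1 := by rw [hq1]; linarith [ha0.2]
    have hl' : (-2:ℤ) < e := by exact_mod_cast hlb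
    have hu' : e < 1 := by exact_mod_cast hub
    omega
  -- A bounds
  have hxval : (2*(m:ℝ)+1) * ((e:ℝ) + 2*t) = (((2*m+1)*e + c : ℤ) : ℝ) := by
    push_cast; nlinarith [htc]
  have hx : a ⟨0, p0⟩ = (e:ℝ) + 2*t := ha_mid 0 hm
  have hA1 : 0 ≤ (2*(m:ℤ)+1)*e + c := by
    have : (0:ℝ) ≤ (((2*m+1)*e + c : ℤ) : ℝ) := by
      rw [← hxval, ← hx]; nlinarith [ha0.1]
    exact_mod_cast this
  have hA2 : (2*(m:ℤ)+1)*e + c < 2*m+1 := by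
    have : (((2*m+1)*e + c : ℤ) : ℝ) < 2*(m:ℝ)+1 := by
      rw [← hxval, ← hx]; nlinarith [ha0.2]
    exact_mod_cast this
  -- B bounds
  have ham := hab ⟨m, pm1⟩
  have hyval : 2 * ((n:ℝ) + (2*(m:ℝ)+1)*t) = ((2*n + c : ℤ) : ℝ) := by
    push_cast; nlinarith [htc]
  have hB1 : 0 ≤ 2*n + c := by
    have : (0:ℝ) ≤ ((2*n + c : ℤ) : ℝ) := by
      rw [← hyval, ← ha_m]; linarith [ham.1]
    exact_mod_cast this
  have hB2 : 2*n + c < 2 := by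
    have : ((2*n + c : ℤ) : ℝ) < 2 := by
      rw [← hyval, ← ha_m]; linarith [ham.2]
    exact_mod_cast this
  -- solve
  have hen : (e = 0 ∧ n = 1 - h) ∨ (e = 0 ∧ n = -h) ∨
      (e = -1 ∧ n = 1 - h - m) ∨ (e = -1 ∧ n = -h - m) := by
    rcases he0 with he | he <;>
      rw [he] at hA1 hA2 hc_def <;>
      simp only [mul_zero, mul_neg, mul_one] at hA1 hA2 hc_def <;> omega
  have hzeq : ∀ e' n', e = e' → n = n' → z = Pt m h e' n' := by
    intro e' n' hee hnn
    funext j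
    by_cases hj0 : (j:ℕ) = 0
    · have hj : j = 0 := Fin.ext (by simpa using hj0)
      rw [hj, hz0]
      simp [Pt]
    by_cases hjl : (j:ℕ) = m+1
    · have hj : j = ⟨m+1, pm2⟩ := Fin.ext (by simpa using hjl)
      rw [hj]
      simp only [Pt]
      rw [if_neg (by omega)]
      simp [← hn_def, hnn]
    · have hj1 : 1 ≤ (j:ℕ) := by omega
      have hj2 : (j:ℕ) ≤ m := by have := j.isLt; omega
      rw [hmid_e j hj1 hj2]
      simp only [Pt]
      rw [if_neg (by omega), if_neg (by omega)]
      exact hee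
  rcases hen with ⟨he, hn⟩ | ⟨he, hn⟩ | ⟨he, hn⟩ | ⟨he, hn⟩
  · exact Or.inl (hzeq _ _ he hn)
  · exact Or.inr (Or.inl (hzeq _ _ he hn))
  · exact Or.inr (Or.inr (Or.inl (hzeq _ _ he hn)))
  · exact Or.inr (Or.inr (Or.inr (hzeq _ _ he hn)))


lemma Pt_ne (m h : ℕ) (hm : 1 ≤ m) {e n e' n' : ℤ} (hne : ¬(e = e' ∧ n = n')) :
    Pt m h e n ≠ Pt m h e' n' := by
  intro hp
  apply hne
  constructor
  · have h1m : ¬ ((1:ℕ) = m + 1) := by omega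
    have := congrFun hp ⟨1, Nat.succ_lt_succ (Nat.succ_pos m)⟩
    simpa [Pt, h1m, show m ≠ 0 by omega] using this
  · have := congrFun hp ⟨m+1, Nat.lt_succ_self _⟩
    simpa [Pt] using this

lemma Pt_zero (m h : ℕ) (e n : ℤ) : Pt m h e n 0 = (h : ℤ) := by simp [Pt]

end Stmt7

/-- For each `1 ≤ h ≤ m`, there are exactly 4 lattice points in the fundamental
parallelepiped of `Δ₂^m` with zeroth coordinate equal to `h`. -/
theorem stmt7 (m : ℕ) (hm : 1 ≤ m) (h : ℕ) (h1 : 1 ≤ h) (h2 : h ≤ m) :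
    {z : Fin (m + 2) → ℤ |
      (fun j => ((z j : ℤ) : ℝ)) ∈ fpp m ∧ z 0 = (h : ℤ)}.ncard = 4 := by
  open Stmt7 in
  have hset : {z : Fin (m + 2) → ℤ |
      (fun j => ((z j : ℤ) : ℝ)) ∈ fpp m ∧ z 0 = (h : ℤ)}
      = {Pt m h 0 (1-h), Pt m h 0 (-h), Pt m h (-1) (1-h-m), Pt m h (-1) (-h-m)} := by
    ext z
    simp only [Set.mem_setOf_eq, Set.mem_insert_iff, Set.mem_singleton_iff]
    constructor
    · rintro ⟨hz, hz0⟩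
      exact Stmt7.mem_char m h hm h1 h2 z hz hz0
    · rintro (rfl | rfl | rfl | rfl)
      · exact ⟨Stmt7.Pt_mem m h 0 (1-h) (2*h-1)
          (by omega) (by omega) (by omega) (by omega) (by omega) (by omega) (by omega),
          Stmt7.Pt_zero m h _ _⟩
      · exact ⟨Stmt7.Pt_mem m h 0 (-h) (2*h)
          (by omega) (by omega) (by omega) (by omega) (by omega) (by omega) (by omega),
          Stmt7.Pt_zero m h _ _⟩
      · exact ⟨Stmt7.Pt_mem m h (-1) (1-h-m) (2*m+2*h-1)
          (by ring_nf <;> omega) (by ring_nf <;> omega) (by omega) (by omega)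
          (by ring_nf <;> omega) (by omega) (by omega),
          Stmt7.Pt_zero m h _ _⟩
      · exact ⟨Stmt7.Pt_mem m h (-1) (-h-m) (2*m+2*h)
          (by ring_nf <;> omega) (by ring_nf <;> omega) (by omega) (by omega)
          (by ring_nf <;> omega) (by omega) (by omega),
          Stmt7.Pt_zero m h _ _⟩
  rw [hset]
  have ne12 : Pt m h 0 (1-h) ≠ Pt m h 0 (-h) := Pt_ne m h hm (by omega)
  have ne13 : Pt m h 0 (1-h) ≠ Pt m h (-1) (1-h-m) := Pt_ne m h hm (by omega)
  have ne14 : Pt m h 0 (1-h) ≠ Pt m h (-1) (-h-m) := Pt_ne m h hm (by omega)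
  have ne23 : Pt m h 0 (-h) ≠ Pt m h (-1) (1-h-m) := Pt_ne m h hm (by omega)
  have ne24 : Pt m h 0 (-h) ≠ Pt m h (-1) (-h-m) := Pt_ne m h hm (by omega)
  have ne34 : Pt m h (-1) (1-h-m) ≠ Pt m h (-1) (-h-m) := Pt_ne m h hm (by omega)
  rw [Set.ncard_insert_of_notMem (by
      simp only [Set.mem_insert_iff, Set.mem_singleton_iff]
      push_neg
      exact ⟨ne12, ne13, ne14⟩)]
  rw [Set.ncard_insert_of_notMem (by
      simp only [Set.mem_insert_iff, Set.mem_singleton_iff]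
      push_neg
      exact ⟨ne23, ne24⟩)]
  rw [Set.ncard_pair ne34]
end

section
/- Let m ≥ 1. The fundamental parallelepiped Π of Δ₂^m contains exactly 4m+2 lattice points. -/
lemma ncard_setOf_div_mem_Ico {d : ℤ} (hd : d ≠ 0) :
    {k : ℤ | (k : ℝ) / d ∈ Set.Ico 0 1}.ncard = d.natAbs := by
  rcases hd.lt_or_gt with hneg | hpos
  · have hd' : (d : ℝ) < 0 := by exact_mod_cast hneg
    have hIoc : {k : ℤ | (k : ℝ) / d ∈ Set.Ico 0 1} = Set.Ioc d 0 := by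
      ext k
      simp [div_nonneg_iff, div_lt_one_of_neg hd', not_le.2 hd', hd'.le, and_comm]
    rw [hIoc, ← Finset.coe_Ioc, Set.ncard_coe_finset, Int.card_Ioc]
    omega
  · have hd' : (0 : ℝ) < d := by exact_mod_cast hpos
    have hIco : {k : ℤ | (k : ℝ) / d ∈ Set.Ico 0 1} = Set.Ico 0 d := by
      ext k
      simp [div_nonneg_iff, div_lt_one hd', not_le.2 hd', hd'.le]
    rw [hIco, ← Finset.coe_Ico, Set.ncard_coe_finset, Int.card_Ico]
    omega

namespace ApexSimplex

variable {n : ℕ} (v : Fin n → ℤ)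

noncomputable def vertex (i : Fin (n + 1)) : Fin (n + 1) → ℝ :=
  Fin.cons 1 (Fin.lastCases (motive := fun _ => Fin n → ℝ) (fun j => (v j : ℝ))
    (fun l => Pi.single l 1) i)

noncomputable def parallelepiped : Set (Fin (n + 1) → ℝ) :=
  { p | ∃ a : Fin (n + 1) → ℝ, (∀ i, 0 ≤ a i ∧ a i < 1) ∧ p = ∑ i, a i • vertex v i }

/-- Up to sign, the determinant of the lifted vertices. -/
def signedVolume : ℤ := 1 - ∑ i, v i

def height (z : Fin (n + 1) → ℤ) : ℤ := z 0 - ∑ j : Fin n, z j.succ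

noncomputable def latticePoint (k : ℤ) : Fin (n + 1) → ℤ :=
  Fin.cons (k + ∑ j, ⌈(k : ℝ) / signedVolume v * v j⌉) (fun j => ⌈(k : ℝ) / signedVolume v * v j⌉)

lemma sum_smul_vertex_zero (a : Fin (n + 1) → ℝ) : (∑ i, a i • vertex v i) 0 = ∑ i, a i := by
  simp [vertex]

lemma sum_smul_vertex_succ (a : Fin (n + 1) → ℝ) (j : Fin n) :
    (∑ i, a i • vertex v i) j.succ = a j.castSucc + a (Fin.last n) * v j := by
  simp [vertex, Fin.sum_univ_castSucc, Pi.single_apply]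

lemma height_latticePoint (k : ℤ) : height (latticePoint v k) = k := by
  simp [height, latticePoint]

lemma latticePoint_injective : Function.Injective (latticePoint v) :=
  Function.LeftInverse.injective (height_latticePoint v)

lemma latticePoint_mem_parallelepiped {k : ℤ} (hd : signedVolume v ≠ 0)
    (hk : (k : ℝ) / signedVolume v ∈ Set.Ico 0 1) :
    (fun j => (latticePoint v k j : ℝ)) ∈ parallelepiped v := by
  set t := (k : ℝ) / signedVolume v with ht
  refine ⟨Fin.snoc (fun j => ⌈t * v j⌉ - t * v j) t, fun i => ?_, funext fun j => ?_⟩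
  · induction i using Fin.lastCases with
    | last => simpa using hk
    | cast j =>
      simp only [Fin.snoc_castSucc]
      constructor <;> linarith [Int.le_ceil (t * v j), Int.ceil_lt_add_one (t * v j)]
  · induction j using Fin.cases with
    | zero =>
      have hkt : (k : ℝ) = t * (1 - ∑ i, (v i : ℝ)) := by
        rw [ht]; field_simp; simp [signedVolume]
      simp only [latticePoint, Fin.cons_zero, ← ht, sum_smul_vertex_zero, Fin.sum_univ_castSucc,
        Fin.snoc_castSucc, Fin.snoc_last]
      push_cast
      rw [hkt, Finset.sum_sub_distrib, ← Finset.mul_sum]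
      ring
    | succ j =>
      rw [sum_smul_vertex_succ]
      simp [latticePoint, ← ht]

lemma eq_latticePoint_height {z : Fin (n + 1) → ℤ} (hd : signedVolume v ≠ 0)
    (hz : (fun j => (z j : ℝ)) ∈ parallelepiped v) :
    (height z : ℝ) / signedVolume v ∈ Set.Ico 0 1 ∧ latticePoint v (height z) = z := by
  obtain ⟨a, ha, hza⟩ := hz
  set t := a (Fin.last n)
  have hsucc (j : Fin n) : (z j.succ : ℝ) = a j.castSucc + t * v j := by
    rw [← sum_smul_vertex_succ, ← hza]
  have hceil (j : Fin n) : ⌈t * v j⌉ = z j.succ :=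
    Int.ceil_eq_iff.2 ⟨by linarith [hsucc j, ha j.castSucc], by linarith [hsucc j, ha j.castSucc]⟩
  have hheight : (height z : ℝ) = t * signedVolume v := by
    have h0 : (z 0 : ℝ) = ∑ j : Fin n, a j.castSucc + t := by
      rw [← Fin.sum_univ_castSucc, ← sum_smul_vertex_zero v, ← hza]
    simp only [height, signedVolume, Int.cast_sub, Int.cast_sum, h0, hsucc,
      Finset.sum_add_distrib, ← Finset.mul_sum]
    ring
  have ht : (height z : ℝ) / signedVolume v = t := by
    rw [hheight]; field_simp
  refine ⟨ht ▸ ha (Fin.last n), funext fun j => ?_⟩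
  induction j using Fin.cases with
  | zero =>
    rw [latticePoint, Fin.cons_zero, ht]
    simp only [hceil, height]
    ring
  | succ j => simp [latticePoint, ht, hceil]

theorem ncard_latticePoints (hd : signedVolume v ≠ 0) :
    {z : Fin (n + 1) → ℤ | (fun j => (z j : ℝ)) ∈ parallelepiped v}.ncard =
      (signedVolume v).natAbs := by
  have himage : {z : Fin (n + 1) → ℤ | (fun j => (z j : ℝ)) ∈ parallelepiped v} =
      latticePoint v '' {k : ℤ | (k : ℝ) / signedVolume v ∈ Set.Ico 0 1} := by
    ext z
    constructor
    · intro hz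
      exact ⟨height z, eq_latticePoint_height v hd hz⟩
    · rintro ⟨k, hk, rfl⟩
      exact latticePoint_mem_parallelepiped v hd hk
  rw [himage, Set.ncard_image_of_injective _ (latticePoint_injective v),
    ncard_setOf_div_mem_Ico hd]

end ApexSimplex

def deltaTwoApex (m : ℕ) : Fin (m + 1) → ℤ := fun j => if (j : ℕ) < m then -2 else -(2 * m + 1)

lemma liftedVertex_eq_vertex_deltaTwoApex (m : ℕ) :
    liftedVertex m = ApexSimplex.vertex (deltaTwoApex m) := by
  funext i j
  induction j using Fin.cases with
  | zero => simp [liftedVertex, ApexSimplex.vertex]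
  | succ k =>
    induction i using Fin.lastCases with
    | last => simp [liftedVertex, ApexSimplex.vertex, deltaTwoApex]
    | cast l =>
      simp [liftedVertex, ApexSimplex.vertex, Pi.single_apply, Fin.succ_ne_zero,
        Fin.ext_iff (a := k), l.isLt]

lemma signedVolume_deltaTwoApex (m : ℕ) :
    ApexSimplex.signedVolume (deltaTwoApex m) = 4 * m + 2 := by
  simp [ApexSimplex.signedVolume, deltaTwoApex, Fin.sum_univ_castSucc]
  ring

theorem stmt8_general (m : ℕ) :
    {z : Fin (m + 2) → ℤ | (fun j => ((z j : ℤ) : ℝ)) ∈ fpp m}.ncard = 4 * m + 2 := by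
  have hfpp : fpp m = ApexSimplex.parallelepiped (deltaTwoApex m) := by
    rw [fpp, ApexSimplex.parallelepiped, liftedVertex_eq_vertex_deltaTwoApex]
  have hvol := signedVolume_deltaTwoApex m
  rw [hfpp, ApexSimplex.ncard_latticePoints _ (by omega), hvol]
  omega

/-- The fundamental parallelepiped of `Δ₂^m` contains exactly `4m+2` lattice points. -/
theorem stmt8 (m : ℕ) (hm : 1 ≤ m) :
    {z : Fin (m + 2) → ℤ | (fun j => ((z j : ℤ) : ℝ)) ∈ fpp m}.ncard = 4 * m + 2 :=
  stmt8_general m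
end

section
/- Let m ≥ 2 and R as above with Hilbert series H_R(z) = 1 + 4z + 4z² + ⋯ + 4z^m + z^{m+1}. Then H_R(−z)·P(z) ≠ 1, where P(z) = (1+z)/(1 − 3z − 3z² + z³); i.e., R fails the Koszul functional equation H_R(−z)P_K^R(z) = 1. -/
/-!
If `H(-z)·P(z) = 1`, clearing the invertible denominator of `P` gives
`H(-z)·(1 + z) = 1 - 3z - 3z² + z³`. For `m ≥ 2` the coefficient of `z²` on the left is
`4 - 4 = 0`, while on the right it is `-3`.
-/

open PowerSeries

section
variable {R : Type*} [CommRing R]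

@[simp]
theorem PowerSeries.coeff_ofNat_mul (a n : ℕ) [a.AtLeastTwo] (φ : R⟦X⟧) :
    coeff n ((no_index (OfNat.ofNat a : R⟦X⟧)) * φ) = OfNat.ofNat a * coeff n φ := by
  rw [← map_ofNat C, coeff_C_mul]

theorem PowerSeries.coeff_neg_X_pow (n d : ℕ) :
    coeff n ((-X : R⟦X⟧) ^ d) = if n = d then (-1) ^ d else 0 := by
  rw [neg_pow, ← map_one C, ← map_neg, ← map_pow, coeff_C_mul_X_pow]

theorem coeff_parallelepiped_hilbert_neg_X {m n : ℕ} (hn : n ∈ Finset.Icc 1 m) :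
    coeff n ((1 : R⟦X⟧) + (∑ d ∈ Finset.Icc 1 m, 4 * (-X) ^ d) + (-X) ^ (m + 1)) =
      4 * (-1) ^ n := by
  have hn' : n ≠ 0 ∧ n ≠ m + 1 := by grind
  simp [coeff_neg_X_pow, hn, hn']

end

/-- The fundamental parallelepiped algebra of `Δ₂^m` (with Hilbert series
`H(z) = 1 + 4z + ⋯ + 4z^m + z^{m+1}` and Poincaré series
`P(z) = (1+z)/(1-3z-3z²+z³)`) fails the Koszul functional equation
`H(-z)·P(z) = 1` for `m ≥ 2`. -/
theorem stmt15 (m : ℕ) (hm : 2 ≤ m) :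
    ((1 : PowerSeries ℚ) + (∑ d ∈ Finset.Icc 1 m, 4 * (-X) ^ d) + (-X) ^ (m + 1)) *
      ((1 + X) * (1 - 3 * X - 3 * X ^ 2 + X ^ 3 : PowerSeries ℚ)⁻¹) ≠ 1 := by
  set H : ℚ⟦X⟧ := 1 + (∑ d ∈ Finset.Icc 1 m, 4 * (-X) ^ d) + (-X) ^ (m + 1) with hH
  set B : ℚ⟦X⟧ := 1 - 3 * X - 3 * X ^ 2 + X ^ 3 with hB
  intro h
  have hB0 : constantCoeff B ≠ 0 := by simp [hB]
  have hcleared : 1 * B = H * (1 + X) :=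
    (eq_mul_inv_iff_mul_eq hB0).1 (by rw [← mul_assoc] at h; exact h.symm)
  have hH2 : coeff 2 H = 4 := by
    rw [hH, coeff_parallelepiped_hilbert_neg_X (Finset.mem_Icc.2 (by omega))]; norm_num
  have hH1 : coeff 1 H = -4 := by
    rw [hH, coeff_parallelepiped_hilbert_neg_X (Finset.mem_Icc.2 (by omega))]; norm_num
  have hB2 : coeff 2 B = -3 := by simp [hB, coeff_X]
  have hHX2 : coeff 2 (H * (1 + X)) = 0 := by
    rw [mul_add, mul_one, map_add, coeff_succ_mul_X, hH2, hH1]; norm_num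
  have hcoeff2 := congrArg (coeff 2) hcleared
  rw [one_mul, hB2, hHX2] at hcoeff2
  norm_num at hcoeff2
end

section
/- Let m ≥ 1 and R = K[x1,x2,x3,x4]/(x1², x2², x3², x4^{m+1}, x1x2, x1x3, x2x4^m, x3x4^m, x2x3 − x1x4). Then R is a local Artinian ring with maximal ideal 𝔪 = (x1,x2,x3,x4), and its socle is one-dimensional, spanned by x1·x4^m; in particular R is Gorenstein. -/
/-!
Write `x₁, …, x₄` for the images of `X 0, …, X 3`. The functional
`λ = coeff(x₁x₄ᵐ) + coeff(x₂x₃x₄ᵐ⁻¹)` kills the ideal (it is its Macaulay dual generator), and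
`λ(x₁ f(x₄)) = f.coeff m`; hence `x₁ f(x₄) = 0` forces `x₄ᵐ⁺¹ ∣ f`. Modulo the relations every
element is `f₀(x₄) + x₁f₁(x₄) + x₂f₂(x₄) + x₃f₃(x₄)`. For a socle element, multiplying by `x₁`
kills `f₀`; then multiplying by `x₃`, `x₂`, `x₄` gives `x₁x₄ fᵢ(x₄) = 0` for `i = 2, 3, 1`, so
`x₄ᵐ ∣ fᵢ`: the `x₂, x₃` parts vanish and `x₁f₁(x₄)` is a multiple of `x₁x₄ᵐ`.
Every `xᵢ` is nilpotent, so `(x₁, …, x₄)` is the nilradical and the only prime: the ring is local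
and, being Noetherian of dimension zero, Artinian.
-/

open MvPolynomial

open scoped Polynomial

theorem map_eq_zero_of_mem_ideal_span {A M F : Type*} [CommSemiring A] [AddCommMonoid M]
    [FunLike F A M] [AddMonoidHomClass F A M] (f : F) {S : Set A}
    (hS : ∀ g ∈ S, ∀ q, f (q * g) = 0) {p : A} (hp : p ∈ Ideal.span S) : f p = 0 := by
  suffices ∀ q, f (q * p) = 0 by simpa using this 1
  induction hp using Submodule.span_induction with
  | mem g hg => exact hS g hg
  | zero => simp
  | add a b _ _ ha hb => intro q; rw [mul_add, map_add, ha, hb, add_zero]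
  | smul a b _ hb => intro q; rw [smul_eq_mul, ← mul_assoc]; exact hb _

theorem forall_mem_ideal_span_mul_eq_zero_iff {A : Type*} [CommSemiring A] {S : Set A} {r : A} :
    (∀ s ∈ Ideal.span S, r * s = 0) ↔ ∀ s ∈ S, r * s = 0 :=
  Submodule.mem_annihilator.symm.trans <| (Submodule.mem_annihilator_span S r).trans Subtype.forall

theorem MvPolynomial.coeff_single_aeval_X {K σ : Type*} [CommSemiring K] (i : σ) (f : K[X])
    (n : ℕ) : coeff (Finsupp.single i n) (Polynomial.aeval (X i : MvPolynomial σ K) f) =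
      f.coeff n := by
  classical
  induction f using Polynomial.induction_on' with
  | add f g hf hg => simp [hf, hg]
  | monomial k a =>
    simp [← Polynomial.C_mul_X_pow_eq_monomial, coeff_C_mul, coeff_X_pow,
      (Finsupp.single_injective i).eq_iff, eq_comm]

namespace relIdeal

variable {K : Type*} [Field K] {m : ℕ}

variable (K) in
noncomputable def macaulayDual (m : ℕ) : MvPolynomial (Fin 4) K →ₗ[K] K :=
  lcoeff K (Finsupp.single 0 1 + Finsupp.single 3 m) +
    lcoeff K (Finsupp.single 1 1 + Finsupp.single 2 1 + Finsupp.single 3 (m - 1))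

theorem macaulayDual_X_zero_mul_aeval (f : K[X]) :
    macaulayDual K m (X 0 * Polynomial.aeval (X 3) f) = f.coeff m := by
  classical
  simp [macaulayDual, coeff_X_mul', coeff_single_aeval_X]

theorem macaulayDual_eq_zero_of_mem (hm : 1 ≤ m) {p : MvPolynomial (Fin 4) K}
    (hp : p ∈ relIdeal K m) : macaulayDual K m p = 0 := by
  classical
  obtain ⟨n, rfl⟩ : ∃ n, m = n + 1 := ⟨m - 1, by omega⟩
  refine map_eq_zero_of_mem_ideal_span _ ?_ hp
  simp only [Set.mem_insert_iff, Set.mem_singleton_iff, forall_eq_or_imp, forall_eq]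
  -- the two monomials of `x₂x₃ - x₁x₄` contribute `∓ coeff x₄ᵐ⁻¹ q`, which cancel
  simp [macaulayDual, X, monomial_pow, monomial_mul, coeff_mul_monomial', Finsupp.le_def,
    Fin.forall_fin_succ, Finsupp.single_apply, mul_sub, add_tsub_add_eq_tsub_left]

local notation "R" => MvPolynomial (Fin 4) K ⧸ relIdeal K m
local notation "π" => Ideal.Quotient.mk (relIdeal K m)
local notation "𝔪" => (Ideal.span {π (X 0), π (X 1), π (X 2), π (X 3)} : Ideal R)

theorem mk_X_relations :
    π (X 0) ^ 2 = 0 ∧ π (X 1) ^ 2 = 0 ∧ π (X 2) ^ 2 = 0 ∧ π (X 3) ^ (m + 1) = 0 ∧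
    π (X 0) * π (X 1) = 0 ∧ π (X 0) * π (X 2) = 0 ∧ π (X 1) * π (X 3) ^ m = 0 ∧
    π (X 2) * π (X 3) ^ m = 0 ∧ π (X 1) * π (X 2) = π (X 0) * π (X 3) := by
  simp only [← map_pow, ← map_mul, ← sub_eq_zero (a := π (X 1 * X 2)), ← map_sub,
    Ideal.Quotient.eq_zero_iff_mem]
  refine ⟨?_, ?_, ?_, ?_, ?_, ?_, ?_, ?_, ?_⟩ <;> exact Ideal.subset_span (by simp)

theorem mk_aeval_X_three (f : K[X]) :
    π (Polynomial.aeval (X 3) f) = Polynomial.aeval (π (X 3)) f := by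
  rw [← Ideal.Quotient.mkₐ_eq_mk K, Polynomial.aeval_algHom_apply]

theorem exists_eq_aeval_add_mul_aeval (r : R) :
    ∃ f : Fin 4 → K[X], r = Polynomial.aeval (π (X 3)) (f 0) +
      π (X 0) * Polynomial.aeval (π (X 3)) (f 1) + π (X 1) * Polynomial.aeval (π (X 3)) (f 2) +
      π (X 2) * Polynomial.aeval (π (X 3)) (f 3) := by
  obtain ⟨h00, h11, h22, -, h01, h02, -, -, h12⟩ := mk_X_relations (K := K) (m := m)
  obtain ⟨p, rfl⟩ := Ideal.Quotient.mk_surjective r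
  induction p using MvPolynomial.induction_on with
  | C a => exact ⟨![Polynomial.C a, 0, 0, 0], by simp; rfl⟩
  | add p q hp hq =>
    obtain ⟨f, hf⟩ := hp
    obtain ⟨g, hg⟩ := hq
    exact ⟨f + g, by simp only [map_add, Pi.add_apply, hf, hg]; ring⟩
  | mul_X p i hp =>
    obtain ⟨f, hf⟩ := hp
    rw [map_mul, hf]
    set F := fun j => Polynomial.aeval (π (X 3)) (f j)
    fin_cases i <;> simp only [Fin.zero_eta, Fin.mk_one, Fin.reduceFinMk]
    · refine ⟨![0, f 0, 0, 0], ?_⟩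
      simp only [Matrix.cons_val, map_zero]
      linear_combination F 1 * h00 + F 2 * h01 + F 3 * h02
    · refine ⟨![0, Polynomial.X * f 3, f 0, 0], ?_⟩
      simp only [Matrix.cons_val, map_zero, map_mul, Polynomial.aeval_X]
      linear_combination F 1 * h01 + F 2 * h11 + F 3 * h12
    · refine ⟨![0, Polynomial.X * f 2, 0, f 0], ?_⟩
      simp only [Matrix.cons_val, map_zero, map_mul, Polynomial.aeval_X]
      linear_combination F 1 * h02 + F 2 * h12 + F 3 * h22
    · refine ⟨fun j => Polynomial.X * f j, ?_⟩
      simp only [map_mul, Polynomial.aeval_X]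
      ring

theorem X_pow_succ_dvd_of_mk_X_zero_mul_aeval_eq_zero (hm : 1 ≤ m) {f : K[X]}
    (hf : π (X 0) * Polynomial.aeval (π (X 3)) f = 0) : Polynomial.X ^ (m + 1) ∣ f := by
  refine Polynomial.X_pow_dvd_iff.2 fun d hd => ?_
  have hmem : X 0 * Polynomial.aeval (X 3) (Polynomial.X ^ (m - d) * f) ∈ relIdeal K m := by
    rw [← Ideal.Quotient.eq_zero_iff_mem, map_mul, mk_aeval_X_three, map_mul, map_pow,
      Polynomial.aeval_X, mul_left_comm, hf, mul_zero]
  rw [← macaulayDual_eq_zero_of_mem hm hmem, macaulayDual_X_zero_mul_aeval,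
    Polynomial.coeff_X_pow_mul', if_pos (Nat.sub_le m d), Nat.sub_sub_self (by omega)]

theorem X_pow_dvd_of_mk_X_zero_mul_X_three_mul_aeval_eq_zero (hm : 1 ≤ m) {f : K[X]}
    (hf : π (X 0) * π (X 3) * Polynomial.aeval (π (X 3)) f = 0) : Polynomial.X ^ m ∣ f := by
  have := X_pow_succ_dvd_of_mk_X_zero_mul_aeval_eq_zero hm (f := Polynomial.X * f)
    (by rwa [map_mul, Polynomial.aeval_X, ← mul_assoc])
  rwa [pow_succ, mul_comm Polynomial.X f, mul_dvd_mul_iff_right Polynomial.X_ne_zero] at this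

theorem aeval_mk_X_three_eq_zero {f : K[X]} (hf : Polynomial.X ^ (m + 1) ∣ f) :
    Polynomial.aeval (π (X 3)) f = 0 := by
  obtain ⟨-, -, -, h33, -⟩ := mk_X_relations (K := K) (m := m)
  obtain ⟨g, rfl⟩ := hf
  rw [map_mul, map_pow, Polynomial.aeval_X, h33, zero_mul]

theorem mk_X_one_mul_aeval_eq_zero {f : K[X]} (hf : Polynomial.X ^ m ∣ f) :
    π (X 1) * Polynomial.aeval (π (X 3)) f = 0 := by
  obtain ⟨-, -, -, -, -, -, h13, -⟩ := mk_X_relations (K := K) (m := m)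
  obtain ⟨g, rfl⟩ := hf
  rw [map_mul, map_pow, Polynomial.aeval_X, ← mul_assoc, h13, zero_mul]

theorem mk_X_two_mul_aeval_eq_zero {f : K[X]} (hf : Polynomial.X ^ m ∣ f) :
    π (X 2) * Polynomial.aeval (π (X 3)) f = 0 := by
  obtain ⟨-, -, -, -, -, -, -, h23, -⟩ := mk_X_relations (K := K) (m := m)
  obtain ⟨g, rfl⟩ := hf
  rw [map_mul, map_pow, Polynomial.aeval_X, ← mul_assoc, h23, zero_mul]

theorem mk_X_zero_mul_aeval_X_pow_mul (g : K[X]) :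
    π (X 0) * Polynomial.aeval (π (X 3)) (Polynomial.X ^ m * g) =
      g.coeff 0 • π (X 0 * X 3 ^ m) := by
  obtain ⟨-, -, -, h33, -⟩ := mk_X_relations (K := K) (m := m)
  obtain ⟨h, hh⟩ := Polynomial.X_dvd_sub_C (p := g)
  generalize g.coeff 0 = c at hh ⊢
  rw [sub_eq_iff_eq_add'] at hh
  subst hh
  rw [map_mul, map_add, map_mul, map_pow, Polynomial.aeval_X, Polynomial.aeval_C, map_mul, map_pow,
    Algebra.smul_def (A := R)]
  linear_combination π (X 0) * Polynomial.aeval (π (X 3)) h * h33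

theorem mem_span_of_forall_mul_mk_X_eq_zero (hm : 1 ≤ m) {r : R}
    (hr : ∀ s ∈ ({π (X 0), π (X 1), π (X 2), π (X 3)} : Set R), r * s = 0) :
    r ∈ K ∙ π (X 0 * X 3 ^ m) := by
  obtain ⟨h00, h11, h22, -, h01, h02, -, -, h12⟩ := mk_X_relations (K := K) (m := m)
  simp only [Set.forall_mem_insert, Set.mem_singleton_iff, forall_eq] at hr
  obtain ⟨hr0, hr1, hr2, hr3⟩ := hr
  obtain ⟨f, rfl⟩ := exists_eq_aeval_add_mul_aeval r
  set F := fun j => Polynomial.aeval (π (X 3)) (f j)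
  have hF0 : F 0 = 0 := aeval_mk_X_three_eq_zero <|
    X_pow_succ_dvd_of_mk_X_zero_mul_aeval_eq_zero hm <| by
      linear_combination hr0 - F 1 * h00 - F 2 * h01 - F 3 * h02
  have hF2 : π (X 1) * F 2 = 0 := mk_X_one_mul_aeval_eq_zero <|
    X_pow_dvd_of_mk_X_zero_mul_X_three_mul_aeval_eq_zero hm <| by
      linear_combination hr2 - π (X 2) * hF0 - F 1 * h02 - F 2 * h12 - F 3 * h22
  have hF3 : π (X 2) * F 3 = 0 := mk_X_two_mul_aeval_eq_zero <|
    X_pow_dvd_of_mk_X_zero_mul_X_three_mul_aeval_eq_zero hm <| by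
      linear_combination hr1 - π (X 1) * hF0 - F 1 * h01 - F 2 * h11 - F 3 * h12
  obtain ⟨g, hg⟩ := X_pow_dvd_of_mk_X_zero_mul_X_three_mul_aeval_eq_zero hm (f := f 1) <| by
    linear_combination hr3 - π (X 3) * (hF0 + hF2 + hF3)
  refine Submodule.mem_span_singleton.2 ⟨g.coeff 0, ?_⟩
  rw [← mk_X_zero_mul_aeval_X_pow_mul, ← hg]
  linear_combination -hF0 - hF2 - hF3

theorem mk_X_zero_mul_X_three_pow_mul_eq_zero :
    ∀ s ∈ ({π (X 0), π (X 1), π (X 2), π (X 3)} : Set R), π (X 0 * X 3 ^ m) * s = 0 := by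
  obtain ⟨h00, -, -, h33, h01, h02, -⟩ := mk_X_relations (K := K) (m := m)
  simp only [Set.forall_mem_insert, Set.mem_singleton_iff, forall_eq, map_mul, map_pow]
  refine ⟨?_, ?_, ?_, ?_⟩
  · linear_combination π (X 3) ^ m * h00
  · linear_combination π (X 3) ^ m * h01
  · linear_combination π (X 3) ^ m * h02
  · linear_combination π (X 0) * h33

theorem forall_mul_mk_X_eq_zero_iff (hm : 1 ≤ m) (r : R) :
    (∀ s ∈ ({π (X 0), π (X 1), π (X 2), π (X 3)} : Set R), r * s = 0) ↔
      r ∈ K ∙ π (X 0 * X 3 ^ m) := by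
  refine ⟨mem_span_of_forall_mul_mk_X_eq_zero hm, fun hr => ?_⟩
  obtain ⟨c, rfl⟩ := Submodule.mem_span_singleton.1 hr
  exact fun s hs => by rw [smul_mul_assoc, mk_X_zero_mul_X_three_pow_mul_eq_zero s hs, smul_zero]

theorem constantCoeff_eq_zero_of_mem_relIdeal {p : MvPolynomial (Fin 4) K}
    (hp : p ∈ relIdeal K m) : constantCoeff p = 0 :=
  (Ideal.span_le (I := RingHom.ker constantCoeff)).2 (by simp [Set.insert_subset_iff]) hp

theorem mk_X_mem_span_mk_X (i : Fin 4) : π (X i) ∈ 𝔪 :=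
  Ideal.subset_span (by fin_cases i <;> simp)

theorem mk_sub_mk_C_constantCoeff_mem (p : MvPolynomial (Fin 4) K) :
    π p - π (C (constantCoeff p)) ∈ 𝔪 := by
  induction p using MvPolynomial.induction_on with
  | C a => simp
  | add p q hp hq => convert add_mem hp hq using 1; simp only [map_add]; ring
  | mul_X p i _ => simpa using Ideal.mul_mem_left _ (π p) (mk_X_mem_span_mk_X i)

theorem isMaximal_span_mk_X : (𝔪).IsMaximal := by
  let φ : R →+* K :=
    Ideal.Quotient.lift _ constantCoeff fun _ => constantCoeff_eq_zero_of_mem_relIdeal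
  have hker : RingHom.ker φ = 𝔪 := by
    refine le_antisymm (fun r hr => ?_) (Ideal.span_le.2 ?_)
    · obtain ⟨p, rfl⟩ := Ideal.Quotient.mk_surjective r
      have hp : constantCoeff p = 0 := RingHom.mem_ker.1 hr
      simpa [hp] using mk_sub_mk_C_constantCoeff_mem (m := m) p
    · simp [Set.insert_subset_iff, φ]
  rw [← hker]
  exact RingHom.ker_isMaximal_of_surjective φ fun a => ⟨π (C a), by simp [φ]⟩

theorem nilradical_eq_span_mk_X : nilradical R = 𝔪 := by
  obtain ⟨h00, h11, h22, h33, -⟩ := mk_X_relations (K := K) (m := m)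
  have := (isMaximal_span_mk_X (K := K) (m := m)).isPrime
  refine le_antisymm (nilradical_le_prime 𝔪) (Ideal.span_le.2 ?_)
  simp only [Set.insert_subset_iff, Set.singleton_subset_iff, SetLike.mem_coe, mem_nilradical]
  exact ⟨⟨2, h00⟩, ⟨2, h11⟩, ⟨2, h22⟩, ⟨m + 1, h33⟩⟩

theorem eq_span_mk_X_of_isMaximal {I : Ideal R} (hI : I.IsMaximal) : I = 𝔪 := by
  have := hI.isPrime
  refine ((isMaximal_span_mk_X (K := K) (m := m)).eq_of_le hI.ne_top ?_).symm
  rw [← nilradical_eq_span_mk_X]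
  exact nilradical_le_prime I

theorem isArtinianRing_quotient : IsArtinianRing R := by
  have : (nilradical R).IsMaximal :=
    nilradical_eq_span_mk_X (K := K) (m := m) ▸ isMaximal_span_mk_X
  exact isArtinianRing_iff_krullDimLE_zero.2 (Ring.KrullDimLE.of_isMaximal_nilradical R)

theorem mk_X_zero_mul_X_three_pow_ne_zero (hm : 1 ≤ m) : π (X 0 * X 3 ^ m) ≠ 0 := fun h => by
  have := X_pow_succ_dvd_of_mk_X_zero_mul_aeval_eq_zero hm (f := Polynomial.X ^ m)
    (by simpa using h)
  simpa using Polynomial.X_pow_dvd_iff.1 this m (Nat.lt_succ_self m)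

end relIdeal

theorem stmt17_general (K : Type*) [Field K] (m : ℕ) (hm : 1 ≤ m) :
    let π := Ideal.Quotient.mk (relIdeal K m)
    let mx : Ideal (MvPolynomial (Fin 4) K ⧸ relIdeal K m) :=
      Ideal.span {π (X 0), π (X 1), π (X 2), π (X 3)}
    IsArtinianRing (MvPolynomial (Fin 4) K ⧸ relIdeal K m) ∧
    mx.IsMaximal ∧
    (∀ I : Ideal (MvPolynomial (Fin 4) K ⧸ relIdeal K m), I.IsMaximal → I = mx) ∧
    π (X 0 * X 3 ^ m) ≠ 0 ∧
    {r : MvPolynomial (Fin 4) K ⧸ relIdeal K m | ∀ s ∈ mx, r * s = 0} =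
      (Submodule.span K {π (X 0 * X 3 ^ m)} :
        Submodule K (MvPolynomial (Fin 4) K ⧸ relIdeal K m)) := by
  intro π mx
  refine ⟨relIdeal.isArtinianRing_quotient, relIdeal.isMaximal_span_mk_X,
    fun I hI => relIdeal.eq_span_mk_X_of_isMaximal hI,
    relIdeal.mk_X_zero_mul_X_three_pow_ne_zero hm, ?_⟩
  ext r
  exact forall_mem_ideal_span_mul_eq_zero_iff.trans (relIdeal.forall_mul_mk_X_eq_zero_iff hm r)

/-- `R` is local Artinian with maximal ideal `(x1,x2,x3,x4)` (it is the unique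
maximal ideal), and its socle is one-dimensional, spanned over `K` by `x1x4^m`;
in particular `R` is Gorenstein. -/
theorem stmt17 (K : Type*) [Field K] [CharZero K] (m : ℕ) (hm : 1 ≤ m) :
    let π := Ideal.Quotient.mk (relIdeal K m)
    let mx : Ideal (MvPolynomial (Fin 4) K ⧸ relIdeal K m) :=
      Ideal.span {π (X 0), π (X 1), π (X 2), π (X 3)}
    IsArtinianRing (MvPolynomial (Fin 4) K ⧸ relIdeal K m) ∧
    mx.IsMaximal ∧
    (∀ I : Ideal (MvPolynomial (Fin 4) K ⧸ relIdeal K m), I.IsMaximal → I = mx) ∧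
    π (X 0 * X 3 ^ m) ≠ 0 ∧
    {r : MvPolynomial (Fin 4) K ⧸ relIdeal K m | ∀ s ∈ mx, r * s = 0} =
      (Submodule.span K {π (X 0 * X 3 ^ m)} :
        Submodule K (MvPolynomial (Fin 4) K ⧸ relIdeal K m)) :=
  stmt17_general K m hm
end

section
/- Let A be the 7×7 0-1 matrix with a_{i,j} = 1 for i ∈ {1,2,3,4}, j ∈ {1,2,3,5,6}; a_{i,7} = 1 for i ∈ {2,3,4}; a_{i,4} = 1 for i ∈ {5,6,7}; and 0 otherwise. Let 𝟙 be the all-ones row vector and B = (1,1,1,1,0,0,0)ᵀ. Then for all k ≥ 0, the number 𝟙·A^k·B equals the coefficient β_{k+1} in the expansion of (1+z)/(1 − 3z − 3z² + z³) = Σ_k β_k z^k; equivalently, the sequence c_k := 𝟙 A^k B satisfies c₀ = 4, c₁ = 15, and c_k = 3c_{k−1} + 3c_{k−2} − c_{k−3} for k ≥ 3 with c₂ = 3c₁ + 3c₀ − 1 = 56. -/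
/-- The 0-1 transfer matrix pattern (0-indexed): rows 0–3 have 1's in columns
0,1,2,4,5; rows 1,2,3 also in column 6; rows 4,5,6 have a 1 only in column 3. -/
def apat (i j : Fin 7) : ℚ :=
  if (i : ℕ) ≤ 3 ∧ ((j : ℕ) ≤ 2 ∨ (j : ℕ) = 4 ∨ (j : ℕ) = 5) then 1
  else if 1 ≤ (i : ℕ) ∧ (i : ℕ) ≤ 3 ∧ (j : ℕ) = 6 then 1
  else if 4 ≤ (i : ℕ) ∧ (j : ℕ) = 3 then 1 else 0

def AmatQ : Matrix (Fin 7) (Fin 7) ℚ := Matrix.of apat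

def Bvec : Fin 7 → ℚ := ![1, 1, 1, 1, 0, 0, 0]

/-- `𝟙 · A^k · B`. -/
def walk (k : ℕ) : ℚ := ∑ i, (AmatQ ^ k).mulVec Bvec i

/-!
Every row vector `𝟙 Aᵏ` is computed from the previous one by summing coordinates, and the first
three give `𝟙 A³ = 3 𝟙 A² + 3 𝟙 A - 𝟙`; pairing with `Aᵏ B` turns this into the recurrence
`c_{k+3} = 3 c_{k+2} + 3 c_{k+1} - c_k`. Multiplying a power series by the reversed characteristic
polynomial `1 - 3z - 3z² + z³` shows that the coefficients of `(1 + z) / (1 - 3z - 3z² + z³)`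
obey the same recurrence from index `1` on, so the two sequences agree once three initial
values do.
-/

open PowerSeries Matrix

namespace LinearRecurrence

section Matrix

variable {S : Type*} [CommSemiring S] (E : LinearRecurrence S)

theorem isSolution_dotProduct_pow_mulVec {n : Type*} [Fintype n] [DecidableEq n]
    (A : Matrix n n S) (u v : n → S)
    (h : u ᵥ* A ^ E.order = ∑ i, E.coeffs i • u ᵥ* A ^ (i : ℕ)) :
    E.IsSolution fun k => u ⬝ᵥ (A ^ k *ᵥ v) := by
  have split (i k : ℕ) : u ⬝ᵥ (A ^ (k + i) *ᵥ v) = (u ᵥ* A ^ i) ⬝ᵥ (A ^ k *ᵥ v) := by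
    rw [add_comm, pow_add, ← mulVec_mulVec, dotProduct_mulVec]
  intro k
  simp only [split, h, sum_dotProduct, smul_dotProduct, smul_eq_mul]

end Matrix

section PowerSeries

variable {R : Type*} [CommRing R] (E : LinearRecurrence R)

/-- The reversed characteristic polynomial, the denominator of the generating function of every
solution. -/
noncomputable def denom : R⟦X⟧ := 1 - ∑ i : Fin E.order, C (E.coeffs i) * X ^ (E.order - i)

theorem constantCoeff_denom : constantCoeff E.denom = 1 := by
  simp only [denom, map_sub, map_one, map_sum, map_mul, constantCoeff_C, map_pow, constantCoeff_X]
  rw [Finset.sum_eq_zero fun i _ => by rw [zero_pow (Nat.sub_ne_zero_of_lt i.isLt), mul_zero],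
    sub_zero]

theorem coeff_denom_mul (F : R⟦X⟧) (n : ℕ) :
    coeff n (E.denom * F) = coeff n F - ∑ i : Fin E.order,
      if E.order - i ≤ n then E.coeffs i * coeff (n - (E.order - i)) F else 0 := by
  simp only [denom, sub_mul, one_mul, Finset.sum_mul, map_sub, map_sum, mul_assoc, coeff_C_mul,
    coeff_X_pow_mul', mul_ite, mul_zero]

theorem coeff_add_order_denom_mul (F : R⟦X⟧) (n : ℕ) :
    coeff (n + E.order) (E.denom * F) =
      coeff (n + E.order) F - ∑ i, E.coeffs i * coeff (n + i) F := by
  rw [coeff_denom_mul]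
  congr 1
  refine Finset.sum_congr rfl fun i _ => ?_
  rw [if_pos (by omega), show n + E.order - (E.order - i) = n + i by omega]

theorem isSolution_coeff_of_coeff_denom_mul_eq_zero (F : R⟦X⟧) (m : ℕ)
    (h : ∀ n, m + E.order ≤ n → coeff n (E.denom * F) = 0) :
    E.IsSolution fun k => coeff (k + m) F := by
  intro k
  have := E.coeff_add_order_denom_mul F (k + m)
  rw [h _ (by omega), eq_comm, sub_eq_zero] at this
  simpa only [add_right_comm _ m] using this

end PowerSeries

section Field

variable {K : Type*} [Field K] (E : LinearRecurrence K)

theorem denom_mul_mul_denom_inv (P : K⟦X⟧) : E.denom * (P * E.denom⁻¹) = P := by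
  rw [mul_left_comm, PowerSeries.mul_inv_cancel _ (by simp [constantCoeff_denom]), mul_one]

theorem isSolution_coeff_mul_denom_inv (P : K⟦X⟧) (m : ℕ)
    (hP : ∀ n, m + E.order ≤ n → coeff n P = 0) :
    E.IsSolution fun k => coeff (k + m) (P * E.denom⁻¹) :=
  E.isSolution_coeff_of_coeff_denom_mul_eq_zero _ m fun n hn => by
    rw [denom_mul_mul_denom_inv, hP n hn]

end Field

end LinearRecurrence

theorem vecMul_AmatQ (v : Fin 7 → ℚ) :
    v ᵥ* AmatQ = ![v 0 + v 1 + v 2 + v 3, v 0 + v 1 + v 2 + v 3, v 0 + v 1 + v 2 + v 3,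
      v 4 + v 5 + v 6, v 0 + v 1 + v 2 + v 3, v 0 + v 1 + v 2 + v 3, v 1 + v 2 + v 3] := by
  ext j
  fin_cases j <;> simp [vecMul, dotProduct, Fin.sum_univ_succ, AmatQ, apat] <;> ring

theorem dotProduct_Bvec (v : Fin 7 → ℚ) : v ⬝ᵥ Bvec = v 0 + v 1 + v 2 + v 3 := by
  simp [Bvec, dotProduct, Fin.sum_univ_succ, add_assoc]

theorem one_vecMul_AmatQ : (1 : Fin 7 → ℚ) ᵥ* AmatQ = ![4, 4, 4, 3, 4, 4, 3] := by
  rw [vecMul_AmatQ]; norm_num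

theorem one_vecMul_AmatQ_sq : (1 : Fin 7 → ℚ) ᵥ* AmatQ ^ 2 = ![15, 15, 15, 11, 15, 15, 11] := by
  rw [sq, ← vecMul_vecMul, one_vecMul_AmatQ, vecMul_AmatQ]; simp [Matrix.cons_val]; norm_num

theorem one_vecMul_AmatQ_pow_three :
    (1 : Fin 7 → ℚ) ᵥ* AmatQ ^ 3 = 3 • (1 ᵥ* AmatQ ^ 2) + 3 • (1 ᵥ* AmatQ) - 1 := by
  rw [pow_succ, ← vecMul_vecMul, one_vecMul_AmatQ_sq, vecMul_AmatQ, one_vecMul_AmatQ]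
  ext j; fin_cases j <;> simp [Matrix.cons_val] <;> norm_num

theorem walk_eq_vecMul_dotProduct (k : ℕ) : walk k = (1 ᵥ* AmatQ ^ k) ⬝ᵥ Bvec := by
  rw [walk, ← dotProduct_mulVec, one_dotProduct]

theorem walk_zero : walk 0 = 4 := by
  rw [walk_eq_vecMul_dotProduct, pow_zero, vecMul_one, dotProduct_Bvec]; norm_num

theorem walk_one : walk 1 = 15 := by
  rw [walk_eq_vecMul_dotProduct, pow_one, one_vecMul_AmatQ, dotProduct_Bvec]
  simp [Matrix.cons_val]; norm_num

theorem walk_two : walk 2 = 56 := by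
  rw [walk_eq_vecMul_dotProduct, one_vecMul_AmatQ_sq, dotProduct_Bvec]
  simp [Matrix.cons_val]; norm_num

def walkRecurrence : LinearRecurrence ℚ := ⟨3, ![-1, 3, 3]⟩

@[simp]
theorem walkRecurrence_order : walkRecurrence.order = 3 := rfl

theorem walkRecurrence_isSolution_iff (u : ℕ → ℚ) :
    walkRecurrence.IsSolution u ↔ ∀ k, u (k + 3) = 3 * u (k + 2) + 3 * u (k + 1) - u k := by
  change (∀ k, u (k + 3) = ∑ i : Fin 3, ![-1, 3, 3] i * u (k + i)) ↔ _
  refine forall_congr' fun k => ?_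
  simp only [Fin.sum_univ_three, Fin.val_zero, Fin.val_one, Fin.val_two, Matrix.cons_val, add_zero]
  constructor <;> intro h <;> linarith

theorem isSolution_walk : walkRecurrence.IsSolution walk := by
  have hwalk : walk = fun k => 1 ⬝ᵥ (AmatQ ^ k *ᵥ Bvec) := funext fun k => (one_dotProduct _).symm
  rw [hwalk]
  refine walkRecurrence.isSolution_dotProduct_pow_mulVec AmatQ 1 Bvec ?_
  change 1 ᵥ* AmatQ ^ 3 = ∑ i : Fin 3, ![-1, 3, 3] i • 1 ᵥ* AmatQ ^ (i : ℕ)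
  rw [Fin.sum_univ_three, one_vecMul_AmatQ_pow_three]
  simp only [Fin.val_zero, Fin.val_one, Fin.val_two, pow_zero, pow_one, vecMul_one, Matrix.cons_val]
  module

theorem denom_walkRecurrence : walkRecurrence.denom = 1 - 3 * X - 3 * X ^ 2 + X ^ 3 := by
  change 1 - ∑ i : Fin 3, C (![-1, 3, 3] i) * X ^ (3 - (i : ℕ)) = _
  simp [Fin.sum_univ_three, map_ofNat]
  ring

theorem walkRecurrence_coeff_one_add_X_mul_denom_inv :
    coeff 1 ((1 + X) * walkRecurrence.denom⁻¹) = 4 ∧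
      coeff 2 ((1 + X) * walkRecurrence.denom⁻¹) = 15 ∧
      coeff 3 ((1 + X) * walkRecurrence.denom⁻¹) = 56 := by
  set F := (1 + X) * walkRecurrence.denom⁻¹
  have hc (n : ℕ) : coeff n F - ∑ i : Fin 3,
      (if 3 - i ≤ n then ![-1, 3, 3] i * coeff (n - (3 - i)) F else 0) = coeff n (1 + X) := by
    rw [← walkRecurrence.denom_mul_mul_denom_inv (1 + X)]
    exact (walkRecurrence.coeff_denom_mul F n).symm
  have h0 := hc 0
  have h1 := hc 1
  have h2 := hc 2
  have h3 := hc 3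
  simp [Fin.sum_univ_three, coeff_one, coeff_X] at h0 h1 h2 h3
  refine ⟨?_, ?_, ?_⟩ <;> linarith

/-- `𝟙·A^k·B` equals the coefficient `β_{k+1}` of `(1+z)/(1-3z-3z²+z³)`;
equivalently `c₀ = 4`, `c₁ = 15`, `c₂ = 56`, and
`c_k = 3c_{k-1} + 3c_{k-2} - c_{k-3}`. -/
theorem stmt18 :
    (∀ k : ℕ, walk k = PowerSeries.coeff (R := ℚ) (k + 1)
      ((1 + PowerSeries.X) *
        (1 - 3 * PowerSeries.X - 3 * PowerSeries.X ^ 2 +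
          PowerSeries.X ^ 3 : PowerSeries ℚ)⁻¹)) ∧
    walk 0 = 4 ∧ walk 1 = 15 ∧ walk 2 = 56 ∧
    (∀ k : ℕ, walk (k + 3) = 3 * walk (k + 2) + 3 * walk (k + 1) - walk k) := by
  rw [← denom_walkRecurrence]
  have hcoeff := walkRecurrence.isSolution_coeff_mul_denom_inv (1 + X) 1 fun n hn => by
    simp only [walkRecurrence_order] at hn
    simp [coeff_one, coeff_X, show n ≠ 0 by omega, show n ≠ 1 by omega]
  obtain ⟨h1, h2, h3⟩ := walkRecurrence_coeff_one_add_X_mul_denom_inv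
  have hinit : Set.EqOn walk (fun k => coeff (k + 1) ((1 + X) * walkRecurrence.denom⁻¹))
      (Finset.range walkRecurrence.order) := by
    intro n hn
    simp only [walkRecurrence_order, Finset.coe_range, Set.mem_Iio] at hn
    interval_cases n
    · exact walk_zero.trans h1.symm
    · exact walk_one.trans h2.symm
    · exact walk_two.trans h3.symm
  have heq := (walkRecurrence.eq_iff_eqOn_range_order _ _ isSolution_walk hcoeff).2 hinit
  exact ⟨congrFun heq, walk_zero, walk_one, walk_two,
    (walkRecurrence_isSolution_iff walk).1 isSolution_walk⟩
end
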